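/- arXiv:math-ph/9912007 — 4 statements merged into one kernel-verified Lean document; each statement's English description precedes it below -/
import Mathlib

section
/- Let P(z) = Σ_{k≥1} P_k z^k and Q(z) = Σ_{k≥1} Q_k z^k be formal power series with zero constant terms over a field of characteristic zero containing an indeterminate ν, and let φ(z) = 1 + Σ_{n≥1} φ_n z^n be the formal monic series solution of z²φ'' + (1-ν)zφ' + P(z)zφ' + Q(z)φ = 0, determined by the recursion n(ν-n)φ_n = Q_n + Σ_{j=1}^{n-1}(jP_{n-j}+Q_{n-j})φ_j. Then φ_n = Σ_{|p|=n} Π_{j=l}^{1} ((s_{j-1} P_{p_j} + Q_{p_j})/(s_j(ν - s_j))), where the sum ranges over all compositions p = (p_1,...,p_l) of n, s_j = p_1+...+p_j, s_0 = 0, and the product is taken with factors ordered from j = l down to j = 1. -/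
/-!
Splitting off the last block `b` of a composition of `n` gives a composition of `j = n - b`,
and in the ordered product the last block contributes the leftmost factor
`(j P_b + Q_b) / (n (ν - n))`. Summing over `j` and `b` therefore shows that the composition
sum satisfies the same recursion as `φ_n`; since `n (ν - n) ≠ 0` the recursion has a unique
solution.
-/

/-- `psum L j` = the `j`-th left partial sum `s_j = p_1 + … + p_j` (with `s_0 = 0`). -/
def psum (L : List ℕ) (j : ℕ) : ℕ := (L.take j).sum

lemma psum_append_of_le (L M : List ℕ) {j : ℕ} (h : j ≤ L.length) :
    psum (L ++ M) j = psum L j := by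
  simp [psum, List.take_append_of_le_length h]

lemma psum_of_length_le {L : List ℕ} {j : ℕ} (h : L.length ≤ j) : psum L j = L.sum := by
  rw [psum, List.take_of_length_le h]

namespace Composition

def appendLastBlock {n : ℕ} (x : Σ j : Fin n, Composition j) : Composition n where
  blocks := x.2.blocks ++ [n - x.1]
  blocks_pos hi := by
    rcases List.mem_append.1 hi with h | h
    · exact x.2.blocks_pos h
    · rw [List.mem_singleton.1 h]; exact Nat.sub_pos_of_lt x.1.isLt
  blocks_sum := by
    rw [List.sum_append, x.2.blocks_sum, List.sum_singleton]
    exact Nat.add_sub_of_le x.1.isLt.le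

lemma appendLastBlock_injective {n : ℕ} : Function.Injective (@appendLastBlock n) := by
  rintro ⟨j₁, c₁⟩ ⟨j₂, c₂⟩ h
  obtain ⟨hblocks, -⟩ := List.append_inj' (congrArg Composition.blocks h) rfl
  obtain rfl : j₁ = j₂ := Fin.ext <| by
    simpa only [c₁.blocks_sum, c₂.blocks_sum] using congrArg List.sum hblocks
  obtain rfl : c₁ = c₂ := Composition.ext hblocks
  rfl

lemma appendLastBlock_surjective {n : ℕ} (hn : 0 < n) :
    Function.Surjective (@appendLastBlock n) := by
  intro c
  have hne : c.blocks ≠ [] := fun h => hn.ne' (c.blocks_eq_nil.1 h)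
  have hsplit := List.dropLast_append_getLast hne
  have hsum : c.blocks.dropLast.sum + c.blocks.getLast hne = n := by
    simpa using (congrArg List.sum hsplit).trans c.blocks_sum
  have hlast : 0 < c.blocks.getLast hne := c.blocks_pos (List.getLast_mem hne)
  refine ⟨⟨⟨c.blocks.dropLast.sum, by omega⟩,
    ⟨c.blocks.dropLast, fun hi => c.blocks_pos (List.dropLast_subset _ hi), rfl⟩⟩, ?_⟩
  refine Composition.ext ?_
  change c.blocks.dropLast ++ [n - c.blocks.dropLast.sum] = c.blocks
  rwa [show n - c.blocks.dropLast.sum = c.blocks.getLast hne by omega]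

instance : Subsingleton (Composition 0) :=
  ⟨fun c d => Composition.ext <| by rw [c.blocks_eq_nil.2 rfl, d.blocks_eq_nil.2 rfl]⟩

end Composition

section FrobeniusCoeff

variable {K : Type*} [Field K] {A : Type*} [Ring A] [Algebra K A]

def frobeniusTerm (ν : K) (P Q : ℕ → A) (L : List ℕ) : A :=
  ((List.range L.length).reverse.map (fun j =>
    (((psum L (j + 1) : K)) * (ν - (psum L (j + 1) : K)))⁻¹ •
      ((psum L j : K) • P (L.getD j 0) + Q (L.getD j 0)))).prod

lemma frobeniusTerm_append_singleton (ν : K) (P Q : ℕ → A) (L : List ℕ) (b : ℕ) :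
    frobeniusTerm ν P Q (L ++ [b]) =
      (((L.sum + b : ℕ) : K) * (ν - ((L.sum + b : ℕ) : K)))⁻¹ •
        (((L.sum : ℕ) : K) • P b + Q b) * frobeniusTerm ν P Q L := by
  have htop : psum (L ++ [b]) (L.length + 1) = L.sum + b := by
    rw [psum_of_length_le (by simp), List.sum_append, List.sum_singleton]
  have hlen : psum (L ++ [b]) L.length = L.sum := by
    rw [psum_append_of_le L [b] le_rfl, psum_of_length_le le_rfl]
  have hlast : (L ++ [b]).getD L.length 0 = b := by simp
  unfold frobeniusTerm
  rw [List.length_append, List.length_singleton, List.range_succ, List.reverse_append,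
    List.reverse_singleton, List.singleton_append, List.map_cons, List.prod_cons,
    htop, hlen, hlast]
  congr 2
  refine List.map_congr_left fun j hj => ?_
  have hj : j < L.length := List.mem_range.1 (List.mem_reverse.1 hj)
  rw [psum_append_of_le L [b] (by omega), psum_append_of_le L [b] hj.le,
    List.getD_append L [b] 0 j hj]

noncomputable def frobeniusCoeff (ν : K) (P Q : ℕ → A) (n : ℕ) : A :=
  ∑ c : Composition n, frobeniusTerm ν P Q c.blocks

lemma frobeniusCoeff_zero (ν : K) (P Q : ℕ → A) : frobeniusCoeff ν P Q 0 = 1 := by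
  rw [frobeniusCoeff, Fintype.sum_subsingleton _ (Composition.ones 0)]
  rfl

lemma frobeniusTerm_appendLastBlock (ν : K) (P Q : ℕ → A) {n : ℕ} (j : Fin n)
    (c : Composition j) :
    frobeniusTerm ν P Q (Composition.appendLastBlock ⟨j, c⟩).blocks =
      ((n : K) * (ν - n))⁻¹ •
        (((j : K) • P (n - j) + Q (n - j)) * frobeniusTerm ν P Q c.blocks) := by
  rw [Composition.appendLastBlock, frobeniusTerm_append_singleton, c.blocks_sum,
    Nat.add_sub_of_le j.isLt.le, smul_mul_assoc]

lemma frobeniusCoeff_eq_inv_smul (ν : K) (P Q : ℕ → A) {n : ℕ} (hn : 0 < n) :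
    frobeniusCoeff ν P Q n = ((n : K) * (ν - n))⁻¹ •
      (Q n + ∑ j ∈ Finset.Ico 1 n,
        ((j : K) • P (n - j) + Q (n - j)) * frobeniusCoeff ν P Q j) := by
  calc frobeniusCoeff ν P Q n
      = ∑ x : Σ j : Fin n, Composition j,
          frobeniusTerm ν P Q (Composition.appendLastBlock x).blocks :=
        (Fintype.sum_bijective _ ⟨Composition.appendLastBlock_injective,
          Composition.appendLastBlock_surjective hn⟩ _ _ fun _ => rfl).symm
    _ = ∑ j : Fin n, ((n : K) * (ν - n))⁻¹ •
          (((j : K) • P (n - j) + Q (n - j)) * frobeniusCoeff ν P Q j) := by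
        simp only [Fintype.sum_sigma, frobeniusTerm_appendLastBlock, frobeniusCoeff,
          Finset.mul_sum, Finset.smul_sum]
    _ = ∑ j ∈ Finset.range n, ((n : K) * (ν - n))⁻¹ •
          (((j : K) • P (n - j) + Q (n - j)) * frobeniusCoeff ν P Q j) :=
        Fin.sum_univ_eq_sum_range (fun j => ((n : K) * (ν - n))⁻¹ •
          (((j : K) • P (n - j) + Q (n - j)) * frobeniusCoeff ν P Q j)) n
    _ = _ := by
        rw [Finset.sum_range_eq_add_Ico _ hn, smul_add, Finset.smul_sum]
        simp [frobeniusCoeff_zero]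

end FrobeniusCoeff

theorem frobenius_composition_formula_general {K : Type*} [Field K] [CharZero K]
    {A : Type*} [Ring A] [Algebra K A]
    (ν : K) (hν : ∀ m : ℕ, 0 < m → ν ≠ (m : K))
    (P Q : ℕ → A) (φ : ℕ → A)
    (hrec : ∀ n : ℕ, 0 < n →
      ((n : K) * (ν - (n : K))) • φ n =
        Q n + ∑ j ∈ Finset.Ico 1 n, ((j : K) • P (n - j) + Q (n - j)) * φ j)
    (n : ℕ) (hn : 0 < n) :
    φ n = ∑ c : Composition n,
      ((List.range c.blocks.length).reverse.map (fun j =>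
        (((psum c.blocks (j + 1) : K)) * (ν - (psum c.blocks (j + 1) : K)))⁻¹ •
          ((psum c.blocks j : K) • P (c.blocks.getD j 0) + Q (c.blocks.getD j 0)))).prod := by
  change φ n = frobeniusCoeff ν P Q n
  induction n using Nat.strong_induction_on with
  | _ m ih =>
    have hscalar : (m : K) * (ν - m) ≠ 0 :=
      mul_ne_zero (Nat.cast_ne_zero.2 hn.ne') (sub_ne_zero.2 (hν m hn))
    have hsum : ∑ j ∈ Finset.Ico 1 m, ((j : K) • P (m - j) + Q (m - j)) * φ j =
        ∑ j ∈ Finset.Ico 1 m, ((j : K) • P (m - j) + Q (m - j)) * frobeniusCoeff ν P Q j :=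
      Finset.sum_congr rfl fun j hj => by
        obtain ⟨hj_pos, hj_lt⟩ := Finset.mem_Ico.1 hj
        rw [ih j hj_lt hj_pos]
    rw [frobeniusCoeff_eq_inv_smul ν P Q hn, ← hsum, ← hrec m hn, inv_smul_smul₀ hscalar]

/-- The method of Frobenius: if `φ` is the formal monic series solution of
`z²φ'' + (1-ν)zφ' + P(z)zφ' + Q(z)φ = 0`, i.e. satisfies the recursion
`n(ν-n)φ_n = Q_n + Σ_{j=1}^{n-1} (j P_{n-j} + Q_{n-j}) φ_j`, then
`φ_n = Σ_{|p|=n} Π_{j=l}^{1} ((s_{j-1} P_{p_j} + Q_{p_j}) / (s_j (ν - s_j)))`,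
the product being ordered from `j = l` down to `j = 1`.  Here the coefficients lie in
a possibly noncommutative algebra over a characteristic zero field `K`, and `ν ∈ K` is
transcendental-like: it is not equal to any positive natural number. -/
theorem frobenius_composition_formula {K : Type*} [Field K] [CharZero K]
    {A : Type*} [Ring A] [Algebra K A]
    (ν : K) (hν : ∀ m : ℕ, 0 < m → ν ≠ (m : K))
    (P Q : ℕ → A) (φ : ℕ → A)
    (hφ0 : φ 0 = 1)
    (hrec : ∀ n : ℕ, 0 < n →
      ((n : K) * (ν - (n : K))) • φ n =
        Q n + ∑ j ∈ Finset.Ico 1 n, ((j : K) • P (n - j) + Q (n - j)) * φ j)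
    (n : ℕ) (hn : 0 < n) :
    φ n = ∑ c : Composition n,
      ((List.range c.blocks.length).reverse.map (fun j =>
        (((psum c.blocks (j + 1) : K)) * (ν - (psum c.blocks (j + 1) : K)))⁻¹ •
          ((psum c.blocks j : K) • P (c.blocks.getD j 0) + Q (c.blocks.getD j 0)))).prod :=
  frobenius_composition_formula_general ν hν P Q φ hrec n hn
end

section
/- For a Schrödinger operator H = z²∂_zz + (1-ν)z∂_z + U(z) with potential U(z) = U_1 z + U_2 z² + ..., the monic formal series solution φ of H[φ] = 0 has coefficients φ_n = Σ_{|p|=n} Π_{j=l}^{1} (U_{p_j}/(s_j(ν-s_j))) (ordered product), and the residue of φ_n at ν = n (the n-th spectral residue ρ_n) equals Σ_{|p|=n} (n/(s_p·s_{p'})) U_{p_1}···U_{p_l}. -/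
/-- `spr L` = `s_p = s_1 s_2 ⋯ s_l`, the product of the partial sums. -/
def spr (L : List ℕ) : ℕ := ∏ j ∈ Finset.range L.length, psum L (j + 1)

/-!
Away from the poles the recursion `n(ν-n)φ_n = U_n + Σ_{0<j<n} U_{n-j}φ_j` determines `φ`,
and the composition sum satisfies the same recursion: removing the last block `n - j` of a
composition of `n` leaves a composition of `j`, and the last partial sum `s_l = n` contributes
exactly the factor `(n(ν-n))⁻¹`. The same factorisation shows that `(ν-n) Π_j (s_j(ν-s_j))⁻¹`
tends to `n⁻¹ Π_{j<l} (s_j(n-s_j))⁻¹` as `ν → n`; since the partial sums of `p'` are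
`n - s_{l-1}, …, n - s_0`, this is `n/(s_p s_{p'})`. Reindexing by `p ↦ p'` turns the reversed
products of the solution into the products of the residue formula.
-/

open Filter Topology Finset

lemma psum_append_of_le_length {L M : List ℕ} {k : ℕ} (h : k ≤ L.length) :
    psum (L ++ M) k = psum L k := by
  rw [psum, psum, List.take_append_of_le_length h]

lemma psum_length (L : List ℕ) : psum L L.length = L.sum := by
  rw [psum, List.take_length]

lemma psum_le_sum (L : List ℕ) (k : ℕ) : psum L k ≤ L.sum := by
  have := L.sum_take_add_sum_drop k
  rw [psum]
  omega

lemma psum_succ_pos {L : List ℕ} (hpos : ∀ x ∈ L, 0 < x) {k : ℕ} (hk : k < L.length) :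
    0 < psum L (k + 1) := by
  obtain ⟨a, t, rfl⟩ := List.exists_cons_of_length_pos (Nat.zero_lt_of_lt hk)
  simp only [psum, List.take_succ_cons, List.sum_cons]
  exact Nat.add_pos_left (hpos a List.mem_cons_self) _

lemma psum_reverse (L : List ℕ) (k : ℕ) : psum L.reverse k = L.sum - psum L (L.length - k) := by
  have := L.sum_take_add_sum_drop (L.length - k)
  rw [psum, psum, List.take_reverse, List.sum_reverse]
  omega

lemma prod_range_psum_append_singleton {M : Type*} [CommMonoid M] (f : ℕ → M) (L : List ℕ)
    (x : ℕ) :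
    ∏ j ∈ range (L ++ [x]).length, f (psum (L ++ [x]) (j + 1)) =
      (∏ j ∈ range L.length, f (psum L (j + 1))) * f (L.sum + x) := by
  rw [List.length_append, List.length_singleton, prod_range_succ]
  congr 1
  · exact prod_congr rfl fun j hj => by rw [psum_append_of_le_length (mem_range.1 hj)]
  · rw [← List.length_singleton (a := x), ← List.length_append, psum_length]
    simp

lemma spr_append_singleton (L : List ℕ) (x : ℕ) : spr (L ++ [x]) = spr L * (L.sum + x) :=
  prod_range_psum_append_singleton id L x

lemma spr_reverse (L : List ℕ) :
    spr L.reverse = ∏ k ∈ range L.length, (L.sum - psum L k) := by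
  rw [spr, List.length_reverse, ← prod_range_reflect (fun k => L.sum - psum L k)]
  refine prod_congr rfl fun j _ => ?_
  rw [psum_reverse, Nat.sub_sub, add_comm 1 j]

lemma spr_reverse_append_singleton (L : List ℕ) (x : ℕ) :
    spr (L ++ [x]).reverse =
      (L.sum + x) * ∏ k ∈ range L.length, (L.sum + x - psum L (k + 1)) := by
  rw [spr_reverse, List.length_append, List.length_singleton, prod_range_succ', List.sum_append,
    List.sum_singleton, mul_comm]
  congr 1
  exact prod_congr rfl fun k hk => by
    rw [psum_append_of_le_length (Nat.succ_le_of_lt (mem_range.1 hk))]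

def compWeight {K : Type*} [Field K] (L : List ℕ) (ν : K) : K :=
  ∏ j ∈ range L.length, ((psum L (j + 1) : K) * (ν - (psum L (j + 1) : K)))⁻¹

lemma compWeight_append_singleton {K : Type*} [Field K] (L : List ℕ) (x : ℕ) (ν : K) :
    compWeight (L ++ [x]) ν =
      compWeight L ν * (((L.sum + x : ℕ) : K) * (ν - ((L.sum + x : ℕ) : K)))⁻¹ :=
  prod_range_psum_append_singleton (fun s : ℕ => ((s : K) * (ν - s))⁻¹) L x

namespace Composition

variable {n : ℕ}

lemma sum_dropLast_add_getLast (c : Composition n) (hc : c.blocks ≠ []) :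
    c.blocks.dropLast.sum + c.blocks.getLast hc = n := by
  rw [← List.sum_concat, List.concat_eq_append, List.dropLast_append_getLast, c.blocks_sum]

lemma sum_dropLast_lt (hn : 0 < n) (c : Composition n) : c.blocks.dropLast.sum < n := by
  have hc : c.blocks ≠ [] := c.blocks_eq_nil.not.2 hn.ne'
  have := c.sum_dropLast_add_getLast hc
  have := c.blocks_pos (c.blocks.getLast_mem hc)
  omega

def sigmaAppendSingleEquiv (hn : 0 < n) : (Σ j : Fin n, Composition j) ≃ Composition n where
  toFun d := (d.2.append (single (n - d.1) (by omega))).cast (by omega)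
  invFun c := ⟨⟨c.blocks.dropLast.sum, c.sum_dropLast_lt hn⟩,
    ⟨c.blocks.dropLast, fun hi => c.blocks_pos (List.dropLast_subset _ hi), rfl⟩⟩
  left_inv := by
    rintro ⟨⟨j, hj⟩, ⟨blocks, blocks_pos, hsum : blocks.sum = j⟩⟩
    subst hsum
    have hdrop : (blocks ++ [n - blocks.sum]).dropLast = blocks := List.dropLast_concat
    refine Sigma.ext ?_ ?_
    · simp [hdrop]
    · simp only
      congr 1 <;> simp [hdrop]
  right_inv c := by
    have hc : c.blocks ≠ [] := c.blocks_eq_nil.not.2 hn.ne'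
    ext1
    have hlast : n - c.blocks.dropLast.sum = c.blocks.getLast hc := by
      have := c.sum_dropLast_add_getLast hc
      omega
    simp only [cast_blocks, append_blocks, single_blocks, hlast, List.dropLast_append_getLast]

lemma sum_blocks_eq_sum_range {M : Type*} [AddCommMonoid M] (hn : 0 < n) (f : List ℕ → M) :
    ∑ c : Composition n, f c.blocks =
      ∑ j ∈ range n, ∑ d : Composition j, f (d.blocks ++ [n - j]) := by
  rw [← (sigmaAppendSingleEquiv hn).sum_comp, Fintype.sum_sigma]
  exact Fin.sum_univ_eq_sum_range (fun j => ∑ d : Composition j, f (d.blocks ++ [n - j])) n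

end Composition

section Solution

variable {A : Type*} [Ring A] [Algebra ℚ A] (U : ℕ → A) (ν : ℚ)

noncomputable def compSolution (n : ℕ) : A :=
  ∑ c : Composition n, compWeight c.blocks ν • (c.blocks.reverse.map U).prod

lemma compSolution_zero : compSolution U ν 0 = 1 := by
  have hones : ∀ c : Composition 0, c = Composition.ones 0 := fun c =>
    Composition.ext (by simp [c.blocks_eq_nil])
  rw [compSolution, Fintype.sum_eq_single _ fun c hc => absurd (hones c) hc]
  simp [compWeight]

lemma smul_compSolution {n : ℕ} (hn : 0 < n) (hν : ν ≠ n) :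
    ((n : ℚ) * (ν - n)) • compSolution U ν n =
      U n + ∑ j ∈ Ico 1 n, U (n - j) * compSolution U ν j := by
  have hq : (n : ℚ) * (ν - n) ≠ 0 := mul_ne_zero (by positivity) (sub_ne_zero.2 hν)
  calc ((n : ℚ) * (ν - n)) • compSolution U ν n
      = ∑ j ∈ range n, U (n - j) * compSolution U ν j := by
        rw [compSolution, Composition.sum_blocks_eq_sum_range hn
          fun L => compWeight L ν • (L.reverse.map U).prod, smul_sum]
        refine sum_congr rfl fun j hj => ?_
        rw [compSolution, smul_sum, mul_sum]
        refine sum_congr rfl fun d _ => ?_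
        have hsum : d.blocks.sum + (n - j) = n := by
          rw [d.blocks_sum]
          exact Nat.add_sub_cancel' (mem_range.1 hj).le
        rw [compWeight_append_singleton, hsum, List.reverse_append, List.reverse_singleton,
          List.singleton_append, List.map_cons, List.prod_cons, smul_smul, mul_smul_comm,
          mul_comm (compWeight d.blocks ν), mul_inv_cancel_left₀ hq]
    _ = U n + ∑ j ∈ Ico 1 n, U (n - j) * compSolution U ν j := by
        rw [range_eq_Ico, sum_eq_sum_Ico_succ_bot hn, compSolution_zero, Nat.sub_zero, mul_one]

lemma eq_compSolution_of_recursion {φ : ℕ → A} (hν : ∀ m : ℕ, 0 < m → ν ≠ m)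
    (hrec : ∀ n : ℕ, 0 < n →
      ((n : ℚ) * (ν - n)) • φ n = U n + ∑ j ∈ Ico 1 n, U (n - j) * φ j) :
    ∀ n : ℕ, 0 < n → φ n = compSolution U ν n := by
  intro n
  induction n using Nat.strong_induction_on with
  | _ n ih =>
    intro hn
    have hq : (n : ℚ) * (ν - n) ≠ 0 := mul_ne_zero (by positivity) (sub_ne_zero.2 (hν n hn))
    refine smul_right_injective A hq ?_
    simp only [hrec n hn, smul_compSolution U ν hn (hν n hn)]
    refine congrArg _ (sum_congr rfl fun j hj => ?_)
    rw [ih j (mem_Ico.1 hj).2 (mem_Ico.1 hj).1]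

end Solution

lemma tendsto_sub_mul_mul_inv_mul_sub {g : ℝ → ℝ} {a c : ℝ} (hg : ContinuousAt g a) :
    Tendsto (fun ν => (ν - a) * (g ν * (c * (ν - a))⁻¹)) (𝓝[≠] a) (𝓝 (g a / c)) := by
  refine ((hg.tendsto.div_const c).mono_left nhdsWithin_le_nhds).congr' ?_
  filter_upwards [self_mem_nhdsWithin] with ν hν
  have : ν - a ≠ 0 := sub_ne_zero.2 hν
  field_simp

lemma continuousAt_compWeight {L : List ℕ} (hpos : ∀ x ∈ L, 0 < x) {a : ℝ}
    (ha : L.sum < a) :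
    ContinuousAt (compWeight L) a := by
  refine tendsto_finsetProd _ fun j hj => ?_
  have hs : (0 : ℝ) < psum L (j + 1) := by exact_mod_cast psum_succ_pos hpos (mem_range.1 hj)
  have hsa : (psum L (j + 1) : ℝ) < a := lt_of_le_of_lt (by exact_mod_cast psum_le_sum _ _) ha
  exact (continuousAt_const.mul (continuousAt_id.sub continuousAt_const)).inv₀
    (mul_pos hs (sub_pos.2 hsa)).ne'

lemma compWeight_div_eq_div_spr_mul_spr_reverse {L : List ℕ} {x : ℕ} (hx : 0 < x) :
    compWeight L ((L.sum + x : ℕ) : ℝ) / (L.sum + x : ℕ) =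
      (L.sum + x : ℕ) / ((spr (L ++ [x]) : ℝ) * spr (L ++ [x]).reverse) := by
  have hN0 : ((L.sum + x : ℕ) : ℝ) ≠ 0 := by positivity
  have hsub : ∀ k ∈ range L.length, ((L.sum + x - psum L (k + 1) : ℕ) : ℝ) =
      (L.sum + x : ℕ) - psum L (k + 1) :=
    fun k _ => Nat.cast_sub ((psum_le_sum L _).trans (Nat.le_add_right _ _))
  rw [spr_append_singleton, spr_reverse_append_singleton, Nat.cast_mul, Nat.cast_mul,
    Nat.cast_prod, prod_congr rfl hsub, spr, Nat.cast_prod, compWeight, prod_inv_distrib,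
    prod_mul_distrib]
  field_simp

lemma tendsto_sub_mul_compWeight {L : List ℕ} (hpos : ∀ x ∈ L, 0 < x) (hne : L ≠ []) :
    Tendsto (fun ν : ℝ => (ν - L.sum) * compWeight L ν) (𝓝[≠] (L.sum : ℝ))
      (𝓝 ((L.sum : ℝ) / ((spr L : ℝ) * spr L.reverse))) := by
  obtain ⟨L, x, rfl⟩ := (List.eq_nil_or_concat' L).resolve_left hne
  have hL : ∀ y ∈ L, 0 < y := fun y hy => hpos y (List.mem_append_left _ hy)
  have hx : 0 < x := hpos x (List.mem_append_right _ (List.mem_singleton_self x))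
  have hsum : (L ++ [x]).sum = L.sum + x := by simp
  simp only [hsum, compWeight_append_singleton, ← compWeight_div_eq_div_spr_mul_spr_reverse hx]
  have hlt : (L.sum : ℝ) < (L.sum + x : ℕ) := by exact_mod_cast Nat.lt_add_of_pos_right hx
  exact tendsto_sub_mul_mul_inv_mul_sub (continuousAt_compWeight hL hlt)

theorem schrodinger_solution_and_spectral_residue_general {A : Type*} [Ring A] [Algebra ℚ A]
    (U : ℕ → A) (φ : ℕ → ℚ → A)
    (hrec : ∀ n : ℕ, 0 < n → ∀ ν : ℚ, (∀ m : ℕ, 0 < m → ν ≠ (m : ℚ)) →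
      ((n : ℚ) * (ν - (n : ℚ))) • φ n ν = U n + ∑ j ∈ Finset.Ico 1 n, U (n - j) * φ j ν)
    (n : ℕ) (hn : 0 < n) :
    (∀ ν : ℚ, (∀ m : ℕ, 0 < m → ν ≠ (m : ℚ)) →
      φ n ν = ∑ c : Composition n,
        (∏ j ∈ Finset.range c.length,
            ((psum c.blocks (j + 1) : ℚ) * (ν - (psum c.blocks (j + 1) : ℚ)))⁻¹) •
          (c.blocks.reverse.map U).prod) ∧
    (∀ r : Composition n → ℚ,
      (∀ c : Composition n,
        Filter.Tendsto
          (fun ν : ℝ => (ν - (n : ℝ)) * ∏ j ∈ Finset.range c.length,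
            ((psum c.blocks (j + 1) : ℝ) * (ν - (psum c.blocks (j + 1) : ℝ)))⁻¹)
          (nhdsWithin (n : ℝ) {(n : ℝ)}ᶜ) (nhds ((r c : ℚ) : ℝ))) →
      (∑ c : Composition n, (r c) • (c.blocks.reverse.map U).prod) =
        ∑ c : Composition n,
          ((n : ℚ) / ((spr c.blocks : ℚ) * spr c.blocks.reverse)) • (c.blocks.map U).prod) := by
  refine ⟨fun ν hν => eq_compSolution_of_recursion U ν hν (fun k hk => hrec k hk ν hν) n hn,
    fun r hr => ?_⟩
  have hr_eq :
      ∀ c : Composition n, r c = (n : ℚ) / ((spr c.blocks : ℚ) * spr c.blocks.reverse) := by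
    intro c
    have h := tendsto_sub_mul_compWeight (fun _ => c.blocks_pos) (c.blocks_eq_nil.not.2 hn.ne')
    rw [c.blocks_sum] at h
    apply Rat.cast_injective (α := ℝ)
    rw [tendsto_nhds_unique (hr c) h]
    push_cast
    rfl
  simp only [hr_eq]
  exact Fintype.sum_equiv (Composition.reverse_involutive.toPerm _) _ _ fun c => by
    simp [mul_comm]

/-- For a Schrödinger operator `H = z²∂_zz + (1-ν)z∂_z + U(z)` with potential
`U(z) = U_1 z + U_2 z² + …` (coefficients in a possibly noncommutative ℚ-algebra), the monic
formal series solution `φ` of `H[φ] = 0` — i.e. `φ` satisfying the recursion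
`n(ν-n)φ_n = U_n + Σ_{j=1}^{n-1} U_{n-j}φ_j` away from the poles — has coefficients
`φ_n = Σ_{|p|=n} Π_{j=l}^{1} (U_{p_j} / (s_j(ν - s_j)))` (ordered product), and the residue
of `φ_n` at `ν = n` (the `n`-th spectral residue, computed coefficientwise via limits of the
scalar rational functions) equals `Σ_{|p|=n} (n/(s_p s_{p'})) U_{p_1}⋯U_{p_l}`. -/
theorem schrodinger_solution_and_spectral_residue {A : Type*} [Ring A] [Algebra ℚ A]
    (U : ℕ → A) (φ : ℕ → ℚ → A)
    (hφ0 : ∀ ν : ℚ, φ 0 ν = 1)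
    (hrec : ∀ n : ℕ, 0 < n → ∀ ν : ℚ, (∀ m : ℕ, 0 < m → ν ≠ (m : ℚ)) →
      ((n : ℚ) * (ν - (n : ℚ))) • φ n ν = U n + ∑ j ∈ Finset.Ico 1 n, U (n - j) * φ j ν)
    (n : ℕ) (hn : 0 < n) :
    (∀ ν : ℚ, (∀ m : ℕ, 0 < m → ν ≠ (m : ℚ)) →
      φ n ν = ∑ c : Composition n,
        (∏ j ∈ Finset.range c.length,
            ((psum c.blocks (j + 1) : ℚ) * (ν - (psum c.blocks (j + 1) : ℚ)))⁻¹) •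
          (c.blocks.reverse.map U).prod) ∧
    (∀ r : Composition n → ℚ,
      (∀ c : Composition n,
        Filter.Tendsto
          (fun ν : ℝ => (ν - (n : ℝ)) * ∏ j ∈ Finset.range c.length,
            ((psum c.blocks (j + 1) : ℝ) * (ν - (psum c.blocks (j + 1) : ℝ)))⁻¹)
          (nhdsWithin (n : ℝ) {(n : ℝ)}ᶜ) (nhds ((r c : ℚ) : ℝ))) →
      (∑ c : Composition n, (r c) • (c.blocks.reverse.map U).prod) =
        ∑ c : Composition n,
          ((n : ℚ) / ((spr c.blocks : ℚ) * spr c.blocks.reverse)) • (c.blocks.map U).prod) :=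
  schrodinger_solution_and_spectral_residue_general U φ hrec n hn
end

section
/- For 0 ≤ i ≤ n-1, with a_{n,i} = i(n-i), b_{n,i} = n-1-2i, and the substitutions u = ¼(α-β-n)(α-β+n), v = ¼(α+β+n)(2-α-β-n), the polynomial identity (α+i)(β+i)(α+n-1-i)(β+n-1-i) = (u+v+a_{n,i})(u+v+a_{n,i+1}) + b_{n,i}²·v holds in ℚ[α,β]. -/
/-!
Put `t = α + β + n`, `b = n - 1 - 2i` and `A = (α + i)(β + i)`. Then `v = -t(t - 2)/4`,
`u + v + a_{n,i} = -(A + bt/2)` and `u + v + a_{n,i+1} = -(A + b(t - 2)/2)`, so the right-hand side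
is `(A + bt/2)(A + b(t - 2)/2) - b²t(t - 2)/4 = A(A + b(t - 1))`, while
`(α + n - 1 - i)(β + n - 1 - i) = A + b(t - 1)`.
-/

open MvPolynomial

theorem eckart_identity {K : Type*} [Field K] [CharZero K] (α β n i u v : K)
    (hu : u = 1 / 4 * ((α - β - n) * (α - β + n)))
    (hv : v = 1 / 4 * ((α + β + n) * (2 - α - β - n))) :
    (α + i) * (β + i) * (α + (n - 1 - i)) * (β + (n - 1 - i)) =
      (u + v + i * (n - i)) * (u + v + (i + 1) * (n - (i + 1))) + (n - 1 - 2 * i) ^ 2 * v := by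
  set t := α + β + n
  set b := n - 1 - 2 * i
  set A := (α + i) * (β + i)
  have hv' : v = -(t * (t - 2)) / 4 := by rw [hv]; ring
  have ha₀ : u + v + i * (n - i) = -(A + b * t / 2) := by rw [hu, hv]; ring
  have ha₁ : u + v + (i + 1) * (n - (i + 1)) = -(A + b * (t - 2) / 2) := by rw [hu, hv]; ring
  calc (α + i) * (β + i) * (α + (n - 1 - i)) * (β + (n - 1 - i))
      = A * (A + b * (t - 1)) := by ring
    _ = (A + b * t / 2) * (A + b * (t - 2) / 2) - b ^ 2 * (t * (t - 2) / 4) := by ring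
    _ = _ := by rw [ha₀, ha₁, hv']; ring

theorem eckart_parameter_identity_general (n : ℕ) (i : ℕ)
    (α β u v : MvPolynomial (Fin 2) ℚ)
    (hu : u = C (1 / 4 : ℚ) * ((α - β - C (n : ℚ)) * (α - β + C (n : ℚ))))
    (hv : v = C (1 / 4 : ℚ) * ((α + β + C (n : ℚ)) * (C 2 - α - β - C (n : ℚ)))) :
    (α + C (i : ℚ)) * (β + C (i : ℚ)) *
        (α + C ((n : ℚ) - 1 - i)) * (β + C ((n : ℚ) - 1 - i)) =
      (u + v + C ((i : ℚ) * ((n : ℚ) - i))) *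
          (u + v + C (((i : ℚ) + 1) * ((n : ℚ) - (i + 1)))) +
        C (((n : ℚ) - 1 - 2 * i) ^ 2) * v := by
  apply MvPolynomial.funext
  intro x
  have hu' := congrArg (eval x) hu
  have hv' := congrArg (eval x) hv
  simp only [map_add, map_sub, map_mul, eval_C] at hu' hv' ⊢
  exact eckart_identity (eval x α) (eval x β) n i _ _ hu' hv'

/-- With `u = ¼(α-β-n)(α-β+n)` and `v = ¼(α+β+n)(2-α-β-n)` in `ℚ[α,β]`,
and `a_{n,i} = i(n-i)`, `b_{n,i} = n-1-2i`, one has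
`(α+i)(β+i)(α+n-1-i)(β+n-1-i) = (u+v+a_{n,i})(u+v+a_{n,i+1}) + b_{n,i}² v`. -/
theorem eckart_parameter_identity (n : ℕ) (hn : 0 < n) (i : ℕ) (hi : i ≤ n - 1)
    (α β u v : MvPolynomial (Fin 2) ℚ)
    (hα : α = X 0) (hβ : β = X 1)
    (hu : u = C (1 / 4 : ℚ) * ((α - β - C (n : ℚ)) * (α - β + C (n : ℚ))))
    (hv : v = C (1 / 4 : ℚ) * ((α + β + C (n : ℚ)) * (C 2 - α - β - C (n : ℚ)))) :
    (α + C (i : ℚ)) * (β + C (i : ℚ)) *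
        (α + C ((n : ℚ) - 1 - i)) * (β + C ((n : ℚ) - 1 - i)) =
      (u + v + C ((i : ℚ) * ((n : ℚ) - i))) *
          (u + v + C (((i : ℚ) + 1) * ((n : ℚ) - (i + 1)))) +
        C (((n : ℚ) - 1 - 2 * i) ^ 2) * v :=
  eckart_parameter_identity_general n i α β u v hu hv
end

section
/- Define ρ_n(u,v) = n · Σ (u^{o(p)} v^{e(p)})/(s_p s_{p'}), the sum over all compositions p of n whose parts all lie in {1,2}, where o(p) and e(p) count parts equal to 1 and 2 respectively. Then for n = 2m even, n!(n-1)!·ρ_n(u,v) = Π_{0<k<n, k odd} (u² + k²v), and for n = 2m+1 odd, n!(n-1)!·ρ_n(u,v) = u · Π_{0<k<n, k even} (u² + k²v). -/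
open MvPolynomial

/-- The Morse spectral residue `ρ_n(u,v) = n Σ (u^{o(p)} v^{e(p)})/(s_p s_{p'})`, summed over
all compositions of `n` with parts in `{1,2}`; here `o(p)` counts parts equal to `1` and
`e(p)` counts parts equal to `2`, and `u = X 0`, `v = X 1`. -/
noncomputable def morseRho (n : ℕ) : MvPolynomial (Fin 2) ℚ :=
  (n : ℚ) • ∑ c : Composition n,
    if ∀ p ∈ c.blocks, p = 1 ∨ p = 2 then
      ((1 : ℚ) / ((spr c.blocks : ℚ) * spr c.blocks.reverse)) •
        (X 0 ^ (c.blocks.count 1) * X 1 ^ (c.blocks.count 2))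
    else 0

/-!
Since `s_p s_{p'} = n² ∏ s (n - s)` over the interior partial sums `s` of `p`, `n ρ_n` is a
weighted sum over paths `0 → n` with steps `1` (weight `u`) and `2` (weight `v`), each visited
interior point `s` contributing `1 / (s (n - s))`. Summing over the paths to `m` and rescaling by
`m! n (n - 1) ⋯ (n - m + 1)` turns the first-step recursion for these partial sums into the
three-term recurrence `K_{m+2} = u K_{m+1} + (m + 1)(n - m - 1) v K_m` of the leading minors of
the Sylvester–Kac matrix, and `n! (n - 1)! ρ_n = K_n`. Comparing the continuants for `n` and
`n + 2` gives `K_{n+2} = (u² + (n + 1)² v) K_n`, whence the product formula.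
-/

open Finset

namespace MorseRho

section Continuant

variable {R : Type*} [CommRing R]

/-- The leading principal minors of the tridiagonal Sylvester–Kac matrix with diagonal `a`,
superdiagonal `(j + 1) b` and subdiagonal `-(N - j - 1)`. -/
def sylvesterContinuant (a b : R) (N : ℕ) : ℕ → R
  | 0 => 1
  | 1 => a
  | j + 2 => a * sylvesterContinuant a b N (j + 1) +
      ((j : R) + 1) * ((N : R) - (j + 1)) * b * sylvesterContinuant a b N j

variable (a b : R)

theorem sylvesterContinuant_add_two_add_two (N : ℕ) : ∀ j : ℕ,
    sylvesterContinuant a b (N + 2) (j + 2) =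
      sylvesterContinuant a b N (j + 2) + ((j : R) + 2) * (j + 1) * b * sylvesterContinuant a b N j
  | 0 => by simp only [sylvesterContinuant]; push_cast; ring
  | 1 => by simp only [sylvesterContinuant]; push_cast; ring
  | j + 2 => by
    have ih₁ := sylvesterContinuant_add_two_add_two N j
    have ih₂ := sylvesterContinuant_add_two_add_two N (j + 1)
    rw [sylvesterContinuant, ih₁, ih₂]
    simp only [sylvesterContinuant]
    push_cast
    ring

theorem sylvesterContinuant_succ_self : ∀ N : ℕ,
    sylvesterContinuant a b N (N + 1) = a * sylvesterContinuant a b N N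
  | 0 => by simp [sylvesterContinuant]
  | N + 1 => by rw [sylvesterContinuant]; push_cast; ring

theorem sylvesterContinuant_self_add_two (N : ℕ) :
    sylvesterContinuant a b (N + 2) (N + 2) =
      (a ^ 2 + ((N : R) + 1) ^ 2 * b) * sylvesterContinuant a b N N := by
  rw [sylvesterContinuant_add_two_add_two, sylvesterContinuant, sylvesterContinuant_succ_self]
  ring

theorem filter_Ico_one_add_two (n r : ℕ) (hr : (n + 1) % 2 = r) :
    (Ico 1 (n + 2)).filter (· % 2 = r) = insert (n + 1) ((Ico 1 n).filter (· % 2 = r)) := by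
  ext k
  simp only [mem_filter, mem_Ico, mem_insert]
  omega

theorem sylvesterContinuant_even (m : ℕ) :
    sylvesterContinuant a b (2 * m) (2 * m) =
      ∏ k ∈ (Ico 1 (2 * m)).filter (· % 2 = 1), (a ^ 2 + (k : R) ^ 2 * b) := by
  induction m with
  | zero => rfl
  | succ m ih =>
    rw [show 2 * (m + 1) = 2 * m + 2 by ring, sylvesterContinuant_self_add_two, ih,
      filter_Ico_one_add_two _ _ (by omega), prod_insert (by simp)]
    push_cast
    rfl

theorem sylvesterContinuant_odd (m : ℕ) :
    sylvesterContinuant a b (2 * m + 1) (2 * m + 1) =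
      a * ∏ k ∈ (Ico 1 (2 * m + 1)).filter (· % 2 = 0), (a ^ 2 + (k : R) ^ 2 * b) := by
  induction m with
  | zero => simp [sylvesterContinuant]
  | succ m ih =>
    rw [show 2 * (m + 1) + 1 = 2 * m + 1 + 2 by ring, sylvesterContinuant_self_add_two, ih,
      filter_Ico_one_add_two _ _ (by omega), prod_insert (by simp)]
    push_cast
    ring

end Continuant

def oneTwoLists : ℕ → Finset (List ℕ)
  | 0 => {[]}
  | 1 => {[1]}
  | m + 2 => (oneTwoLists (m + 1)).image (1 :: ·) ∪ (oneTwoLists m).image (2 :: ·)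

theorem mem_oneTwoLists {m : ℕ} {L : List ℕ} :
    L ∈ oneTwoLists m ↔ (∀ p ∈ L, p = 1 ∨ p = 2) ∧ L.sum = m := by
  induction L generalizing m with
  | nil => match m with
    | 0 | 1 | m + 2 => simp [oneTwoLists]
  | cons k L ih => match m with
    | 0 => simp [oneTwoLists]; omega
    | 1 =>
      have ih₀ := @ih 0
      simp [oneTwoLists] at ih₀ ⊢
      grind
    | m + 2 =>
      simp only [oneTwoLists, mem_union, mem_image, List.cons.injEq]
      constructor
      · rintro (⟨L, hL, rfl, rfl⟩ | ⟨L, hL, rfl, rfl⟩) <;> rw [ih] at hL <;>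
          exact ⟨by simpa using hL.1, by simp only [List.sum_cons, hL.2]; omega⟩
      · rintro ⟨h, hsum⟩
        simp only [List.mem_cons, forall_eq_or_imp, List.sum_cons] at h hsum
        rcases h.1 with rfl | rfl
        · exact .inl ⟨L, ih.2 ⟨h.2, by omega⟩, rfl, rfl⟩
        · exact .inr ⟨L, ih.2 ⟨h.2, by omega⟩, rfl, rfl⟩

theorem oneTwoLists_eq_image (n : ℕ) :
    oneTwoLists n = (univ.filter fun c : Composition n => ∀ p ∈ c.blocks, p = 1 ∨ p = 2).image
      Composition.blocks := by
  ext L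
  simp only [mem_image, mem_filter, mem_univ, true_and, mem_oneTwoLists]
  constructor
  · rintro ⟨h, hsum⟩
    exact ⟨⟨L, fun hp => by rcases h _ hp with rfl | rfl <;> norm_num, hsum⟩, h, rfl⟩
  · rintro ⟨c, h, rfl⟩
    exact ⟨h, c.blocks_sum⟩

theorem sum_composition_eq_sum_oneTwoLists {M : Type*} [AddCommMonoid M] (n : ℕ)
    (f : List ℕ → M) :
    (∑ c : Composition n, if ∀ p ∈ c.blocks, p = 1 ∨ p = 2 then f c.blocks else 0) =
      ∑ L ∈ oneTwoLists n, f L := by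
  rw [oneTwoLists_eq_image, sum_image fun _ _ _ _ h => Composition.ext h, sum_filter]

theorem spr_append_singleton (L : List ℕ) (k : ℕ) : spr (L ++ [k]) = spr L * (L.sum + k) := by
  rw [spr, List.length_append, List.length_singleton, prod_range_succ, spr]
  congr 1
  · refine prod_congr rfl fun j hj => ?_
    rw [_root_.psum, _root_.psum, List.take_append_of_le_length (by simp at hj; omega)]
  · rw [_root_.psum, List.take_of_length_le (by simp), List.sum_append, List.sum_singleton]

theorem spr_reverse_cons (k : ℕ) (L : List ℕ) :
    spr (k :: L).reverse = spr L.reverse * (L.sum + k) := by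
  rw [List.reverse_cons, spr_append_singleton, List.sum_reverse]

/-- The product of the partial sums of `L` seen as the final segment of a composition of `N`;
it equals `spr L` when `L.sum = N`, and unlike `spr` it is multiplicative in the head of `L`. -/
def sprAt (N : ℕ) (L : List ℕ) : ℚ :=
  ∏ j ∈ range L.length, ((N : ℚ) - (L.drop (j + 1)).sum)

theorem cast_spr (L : List ℕ) : (spr L : ℚ) = sprAt L.sum L := by
  rw [spr, sprAt, Nat.cast_prod]
  refine prod_congr rfl fun j _ => ?_
  rw [eq_sub_iff_add_eq, _root_.psum, ← Nat.cast_add, List.sum_take_add_sum_drop]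

theorem sprAt_cons (N k : ℕ) (L : List ℕ) :
    sprAt N (k :: L) = sprAt N L * ((N : ℚ) - L.sum) := by
  rw [sprAt, List.length_cons, prod_range_succ', sprAt]
  simp

variable {R : Type*} [CommRing R] [Algebra ℚ R] (a b : R)

noncomputable def weight (N : ℕ) (L : List ℕ) : R :=
  (1 / (sprAt N L * spr L.reverse) : ℚ) • (a ^ L.count 1 * b ^ L.count 2)

theorem weight_of_sum_eq {N : ℕ} {L : List ℕ} (h : L.sum = N) :
    weight a b N L = (1 / ((spr L : ℚ) * spr L.reverse)) • (a ^ L.count 1 * b ^ L.count 2) := by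
  rw [weight, cast_spr L, h]

theorem one_div_sprAt_mul_spr_reverse_cons (N k : ℕ) (L : List ℕ) :
    (1 / (sprAt N (k :: L) * spr (k :: L).reverse) : ℚ) =
      1 / (((N : ℚ) - L.sum) * (L.sum + k)) * (1 / (sprAt N L * spr L.reverse)) := by
  rw [sprAt_cons, spr_reverse_cons]
  push_cast
  rw [one_div_mul_one_div]
  ring_nf

theorem weight_one_cons (N : ℕ) (L : List ℕ) :
    weight a b N (1 :: L) = (1 / (((N : ℚ) - L.sum) * (L.sum + 1))) • (a * weight a b N L) := by
  rw [weight, weight, one_div_sprAt_mul_spr_reverse_cons, mul_smul, mul_smul_comm,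
    List.count_cons_self, List.count_cons_of_ne (by decide), Nat.cast_one]
  congr 2
  ring

theorem weight_two_cons (N : ℕ) (L : List ℕ) :
    weight a b N (2 :: L) = (1 / (((N : ℚ) - L.sum) * (L.sum + 2))) • (b * weight a b N L) := by
  rw [weight, weight, one_div_sprAt_mul_spr_reverse_cons, mul_smul, mul_smul_comm,
    List.count_cons_self, List.count_cons_of_ne (by decide), Nat.cast_ofNat]
  congr 2
  ring

noncomputable def weightSum (N m : ℕ) : R := ∑ L ∈ oneTwoLists m, weight a b N L

theorem weightSum_zero (N : ℕ) : weightSum a b N 0 = 1 := by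
  simp [weightSum, oneTwoLists, weight, sprAt, spr]

theorem weightSum_one (N : ℕ) : weightSum a b N 1 = (1 / (N : ℚ)) • a := by
  simp [weightSum, oneTwoLists, weight, sprAt, spr, _root_.psum]

theorem weightSum_add_two (N m : ℕ) :
    weightSum a b N (m + 2) =
      (1 / (((N : ℚ) - (m + 1)) * (m + 2))) • (a * weightSum a b N (m + 1)) +
        (1 / (((N : ℚ) - m) * (m + 2))) • (b * weightSum a b N m) := by
  have hdisj :
      Disjoint ((oneTwoLists (m + 1)).image (1 :: ·)) ((oneTwoLists m).image (2 :: ·)) := by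
    simp [disjoint_left]
  rw [weightSum, oneTwoLists, sum_union hdisj, sum_image (by simp), sum_image (by simp),
    weightSum, weightSum, mul_sum, mul_sum, smul_sum, smul_sum]
  congr 1 <;> refine sum_congr rfl fun L hL => ?_
  · rw [weight_one_cons, (mem_oneTwoLists.1 hL).2]
    push_cast
    ring_nf
  · rw [weight_two_cons, (mem_oneTwoLists.1 hL).2]

theorem factorial_mul_descFactorial_smul_weightSum (N : ℕ) : ∀ m ≤ N,
    ((m.factorial * N.descFactorial m : ℕ) : ℚ) • weightSum a b N m =
      sylvesterContinuant a b N m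
  | 0, _ => by simp [weightSum_zero, sylvesterContinuant]
  | 1, h => by
    have hN : (N : ℚ) ≠ 0 := by exact_mod_cast (by omega : N ≠ 0)
    simp [weightSum_one, smul_smul, sylvesterContinuant, hN]
  | m + 2, h => by
    have ih₁ := factorial_mul_descFactorial_smul_weightSum N (m + 1) (by omega)
    have ih₀ := factorial_mul_descFactorial_smul_weightSum N m (by omega)
    have hN₁ : (N : ℚ) - (m + 1) ≠ 0 := sub_ne_zero.2 (by norm_cast; omega)
    have hN₀ : (N : ℚ) - m ≠ 0 := sub_ne_zero.2 (by norm_cast; omega)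
    have hm : (m : ℚ) + 2 ≠ 0 := by positivity
    have hcoeff₁ : (((m + 2).factorial * N.descFactorial (m + 2) : ℕ) : ℚ) *
        (1 / (((N : ℚ) - (m + 1)) * (m + 2))) =
          (((m + 1).factorial * N.descFactorial (m + 1) : ℕ) : ℚ) := by
      push_cast [Nat.factorial_succ, Nat.descFactorial_succ, Nat.cast_sub (by omega : m + 1 ≤ N),
        Nat.cast_sub (by omega : m ≤ N)]
      field_simp
      ring
    have hcoeff₀ : (((m + 2).factorial * N.descFactorial (m + 2) : ℕ) : ℚ) *
        (1 / (((N : ℚ) - m) * (m + 2))) =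
          ((m : ℚ) + 1) * ((N : ℚ) - (m + 1)) *
            ((m.factorial * N.descFactorial m : ℕ) : ℚ) := by
      push_cast [Nat.factorial_succ, Nat.descFactorial_succ, Nat.cast_sub (by omega : m + 1 ≤ N),
        Nat.cast_sub (by omega : m ≤ N)]
      field_simp
      ring
    rw [weightSum_add_two, smul_add, smul_smul, smul_smul, hcoeff₁, hcoeff₀, mul_smul,
      ← mul_smul_comm, ih₁, ← mul_smul_comm, ih₀, sylvesterContinuant, Algebra.smul_def]
    push_cast
    ring

end MorseRho

open MorseRho

theorem morseRho_eq_smul_weightSum (n : ℕ) :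
    morseRho n = (n : ℚ) • weightSum (X 0) (X 1) n n := by
  rw [morseRho, sum_composition_eq_sum_oneTwoLists n
      (fun L => (1 / ((spr L : ℚ) * spr L.reverse)) • (X 0 ^ L.count 1 * X 1 ^ L.count 2)),
    weightSum]
  congr 1
  exact sum_congr rfl fun L hL => (weight_of_sum_eq _ _ (mem_oneTwoLists.1 hL).2).symm

theorem factorial_mul_factorial_smul_morseRho {n : ℕ} (hn : 0 < n) :
    ((n.factorial : ℚ) * (n - 1).factorial) • morseRho n =
      sylvesterContinuant (X 0) (X 1) n n := by
  have hfac : ((n - 1).factorial : ℚ) * n = n.factorial := by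
    exact_mod_cast (mul_comm _ _).trans (Nat.mul_factorial_pred hn.ne')
  rw [morseRho_eq_smul_weightSum, smul_smul, mul_assoc, hfac,
    ← factorial_mul_descFactorial_smul_weightSum _ _ n n le_rfl, Nat.descFactorial_self]
  push_cast
  rfl

/-- Factorization of the Morse spectral residues: for `n = 2m` even,
`n!(n-1)! ρ_n(u,v) = Π_{0<k<n, k odd} (u² + k²v)`; for `n = 2m+1` odd,
`n!(n-1)! ρ_n(u,v) = u Π_{0<k<n, k even} (u² + k²v)`. -/
theorem morseRho_factorization (n : ℕ) (hn : 0 < n) :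
    (∀ m : ℕ, n = 2 * m →
      ((n.factorial : ℚ) * (n - 1).factorial) • morseRho n =
        ∏ k ∈ (Finset.Ico 1 n).filter (fun k => k % 2 = 1),
          (X 0 ^ 2 + C ((k : ℚ) ^ 2) * X 1)) ∧
    (∀ m : ℕ, n = 2 * m + 1 →
      ((n.factorial : ℚ) * (n - 1).factorial) • morseRho n =
        X 0 * ∏ k ∈ (Finset.Ico 1 n).filter (fun k => k % 2 = 0),
          (X 0 ^ 2 + C ((k : ℚ) ^ 2) * X 1)) := by
  have hC (k : ℕ) : C ((k : ℚ) ^ 2) = (k : MvPolynomial (Fin 2) ℚ) ^ 2 := by simp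
  simp only [hC, factorial_mul_factorial_smul_morseRho hn]
  exact ⟨fun m hm => hm ▸ sylvesterContinuant_even _ _ m,
    fun m hm => hm ▸ sylvesterContinuant_odd _ _ m⟩
end
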